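/- arXiv:2505.02315 — 2 statements merged into one kernel-verified Lean document; each statement's English description precedes it below -/
import Mathlib

section
/- Let K₁₂, K₁₃, K₁₄, K₂₃, K₂₄, K₃₄ be real numbers and set λ₁ := K₁₂+K₁₃+K₁₄, λ₂ := K₁₂+K₂₃+K₂₄, λ₃ := K₁₃+K₂₃+K₃₄, λ₄ := K₁₄+K₂₄+K₃₄, R := λ₁+λ₂+λ₃+λ₄ and N := λ₁²+λ₂²+λ₃²+λ₄². If λ₁ ≤ λ₂ ≤ λ₃ ≤ λ₄ and K₃₄ ≤ 1/2, then (λ₁+λ₂) − 2[K₁₂(λ₁+λ₂) + (K₁₃+K₂₃)λ₃ + (K₁₄+K₂₄)λ₄] ≤ (R − 2N) + (λ₁+λ₂)(R−1) − 4λ₁λ₂. -/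
theorem eigen_sum_evolution_K_half (K12 K13 K14 K23 K24 K34 lam1 lam2 lam3 lam4 R N : ℝ)
    (hl1 : lam1 = K12 + K13 + K14) (hl2 : lam2 = K12 + K23 + K24)
    (hl3 : lam3 = K13 + K23 + K34) (hl4 : lam4 = K14 + K24 + K34)
    (hR : R = lam1 + lam2 + lam3 + lam4)
    (hN : N = lam1 ^ 2 + lam2 ^ 2 + lam3 ^ 2 + lam4 ^ 2)
    (h12 : lam1 ≤ lam2) (h23 : lam2 ≤ lam3) (h34 : lam3 ≤ lam4)
    (hK : K34 ≤ 1 / 2) :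
    (lam1 + lam2) - 2 * (K12 * (lam1 + lam2) + (K13 + K23) * lam3 + (K14 + K24) * lam4) ≤
      (R - 2 * N) + (lam1 + lam2) * (R - 1) - 4 * lam1 * lam2 := by
  have key : (0:ℝ) ≤ (lam3 + lam4 - lam1 - lam2) * (1 - 2 * K34) :=
    mul_nonneg (by linarith) (by linarith)
  subst hl1 hl2 hl3 hl4 hR hN
  nlinarith [key]
end

section
/- Let K₁₂, K₁₃, K₁₄, K₂₃, K₂₄, K₃₄ be real numbers and set λ₁ := K₁₂+K₁₃+K₁₄, λ₂ := K₁₂+K₂₃+K₂₄, λ₃ := K₁₃+K₂₃+K₃₄, λ₄ := K₁₄+K₂₄+K₃₄, R := λ₁+λ₂+λ₃+λ₄ and N := λ₁²+λ₂²+λ₃²+λ₄². If λ₁ ≤ λ₂ ≤ λ₃ ≤ λ₄ and K₁₂ ≤ λ₁+λ₂, then (λ₁+λ₂) − 2[K₁₂(λ₁+λ₂) + (K₁₃+K₂₃)λ₃ + (K₁₄+K₂₄)λ₄] ≤ (R − 2N) + (R−1)(λ₃+λ₄) − 4λ₁λ₂. -/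
theorem eigen_sum_evolution_biRic (K12 K13 K14 K23 K24 K34 lam1 lam2 lam3 lam4 R N : ℝ)
    (hl1 : lam1 = K12 + K13 + K14) (hl2 : lam2 = K12 + K23 + K24)
    (hl3 : lam3 = K13 + K23 + K34) (hl4 : lam4 = K14 + K24 + K34)
    (hR : R = lam1 + lam2 + lam3 + lam4)
    (hN : N = lam1 ^ 2 + lam2 ^ 2 + lam3 ^ 2 + lam4 ^ 2)
    (h12 : lam1 ≤ lam2) (h23 : lam2 ≤ lam3) (h34 : lam3 ≤ lam4)
    (hK : K12 ≤ lam1 + lam2) :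
    (lam1 + lam2) - 2 * (K12 * (lam1 + lam2) + (K13 + K23) * lam3 + (K14 + K24) * lam4) ≤
      (R - 2 * N) + (R - 1) * (lam3 + lam4) - 4 * lam1 * lam2 := by
  subst hl1 hl2 hl3 hl4 hR hN
  nlinarith [mul_nonneg (sub_nonneg.2 hK) (by linarith : (0:ℝ) ≤ (K13 + K23 + K34) + (K14 + K24 + K34) - ((K12 + K13 + K14) + (K12 + K23 + K24)))]
end
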